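/- For every integer N ≥ 0, the trace of the ℚ-linear endomorphism σ of the space of homogeneous polynomials of degree N in ℚ[X,Y] defined by (σP)(X,Y) = P(Y, −X−Y) equals 1 if N ≡ 0 (mod 3), equals −1 if N ≡ 1 (mod 3), and equals 0 if N ≡ 2 (mod 3). -/

import Mathlib

/-!
In the monomial basis `X 0 ^ a * X 1 ^ b` (`a + b = N`), the substitution sends the basis vector
of index `(a, b)` to `(-1) ^ b * X 1 ^ a * (X 0 + X 1) ^ b`, whose diagonal coefficient is
`(-1) ^ b * b.choose a`. By Pascal's rule the sums `T N = ∑_{a + b = N} (-1) ^ b * b.choose a`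
satisfy `T (N + 2) = -T (N + 1) - T N`, so they run through `1, -1, 0` periodically.
-/

noncomputable section

open MvPolynomial Finset

theorem sum_antidiagonal_neg_one_pow_mul_choose {R : Type*} [Ring R] (n : ℕ) :
    ∑ p ∈ antidiagonal n, (-1 : R) ^ p.2 * (p.2.choose p.1 : R) =
      if n % 3 = 0 then 1 else if n % 3 = 1 then -1 else 0 := by
  induction n using Nat.strong_induction_on with
  | _ n ih =>
    match n with
    | 0 => simp
    | 1 => simp [Nat.sum_antidiagonal_succ]
    | n + 2 =>
      have hrec : ∑ p ∈ antidiagonal (n + 2), (-1 : R) ^ p.2 * (p.2.choose p.1 : R) =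
          -∑ p ∈ antidiagonal (n + 1), (-1 : R) ^ p.2 * (p.2.choose p.1 : R)
            - ∑ p ∈ antidiagonal n, (-1 : R) ^ p.2 * (p.2.choose p.1 : R) := by
        rw [Nat.sum_antidiagonal_succ, Nat.sum_antidiagonal_succ',
          Nat.sum_antidiagonal_succ (n := n)]
        simp only [Nat.choose_succ_succ, Nat.choose_zero_right, Nat.choose_zero_succ, Nat.cast_add,
          Nat.cast_one, Nat.cast_zero, pow_succ, mul_add, mul_neg, mul_one, mul_zero,
          sum_add_distrib, neg_mul, sum_neg_distrib, Nat.succ_eq_add_one]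
        abel
      rw [hrec, ih (n + 1) (by omega), ih n (by omega)]
      have : n % 3 < 3 := Nat.mod_lt _ (by norm_num)
      interval_cases h : n % 3 <;> simp [Nat.add_mod, h]

theorem LinearMap.trace_eq_sum_basis_repr {R M ι : Type*} [CommSemiring R] [AddCommMonoid M]
    [Module R M] [Fintype ι] (b : Module.Basis ι R M) (f : M →ₗ[R] M) :
    LinearMap.trace R M f = ∑ i, b.repr (f (b i)) i := by
  classical
  simp [LinearMap.trace_eq_matrix_trace R b, Matrix.trace, LinearMap.toMatrix_apply]

namespace MvPolynomial

section Homogeneous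

variable {σ R : Type*} [CommSemiring R]

def homogeneousBasis (n : ℕ) :
    Module.Basis {d : σ →₀ ℕ | d.degree = n} R (homogeneousSubmodule σ R n) :=
  (basisRestrictSupport R _).map
    (LinearEquiv.ofEq _ _ (homogeneousSubmodule_eq_finsupp_supported σ R n).symm)

@[simp]
lemma homogeneousBasis_repr_apply (n : ℕ) (p : homogeneousSubmodule σ R n)
    (d : {d : σ →₀ ℕ | d.degree = n}) :
    (homogeneousBasis n).repr p d = coeff d.1 p :=
  rfl

@[simp]
lemma coe_homogeneousBasis_apply (n : ℕ) (d : {d : σ →₀ ℕ | d.degree = n}) :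
    (homogeneousBasis (R := R) n d : MvPolynomial σ R) = monomial d.1 1 := by
  classical
  suffices homogeneousBasis n d = ⟨monomial d.1 (1 : R), isHomogeneous_monomial _ d.2⟩ from
    congrArg Subtype.val this
  rw [Module.Basis.apply_eq_iff]
  ext e
  simp [coeff_monomial, Finsupp.single_apply, Subtype.ext_iff]

/-- The monomial basis in two variables, with `X 0 ^ a * X 1 ^ b` indexed by `(a, b)`. -/
def homogeneousBasisFinTwo (n : ℕ) :
    Module.Basis (antidiagonal n) R (homogeneousSubmodule (Fin 2) R n) :=
  (homogeneousBasis n).reindex <| (finTwoArrowEquiv' ℕ).subtypeEquiv fun d => by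
    simp [Finsupp.degree_eq_sum]

@[simp]
lemma homogeneousBasisFinTwo_repr_apply (n : ℕ) (p : homogeneousSubmodule (Fin 2) R n)
    (i : antidiagonal n) :
    (homogeneousBasisFinTwo n).repr p i = coeff ((finTwoArrowEquiv' ℕ).symm i) p := by
  simp [homogeneousBasisFinTwo]

@[simp]
lemma coe_homogeneousBasisFinTwo_apply (n : ℕ) (i : antidiagonal n) :
    (homogeneousBasisFinTwo (R := R) n i : MvPolynomial (Fin 2) R) =
      monomial ((finTwoArrowEquiv' ℕ).symm i) 1 := by
  simp [homogeneousBasisFinTwo]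

end Homogeneous

theorem coeff_aeval_cyclic_monomial {R : Type*} [CommRing R] (d : Fin 2 →₀ ℕ) :
    coeff d (aeval ![X 1, -X 0 - X 1] (monomial d (1 : R))) =
      (-1) ^ d 1 * ((d 1).choose (d 0) : R) := by
  have hsubst : aeval ![X 1, -X 0 - X 1] (monomial d (1 : R)) =
      C ((-1) ^ d 1) *
        (monomial (Finsupp.single 1 (d 0)) 1 * (X 0 + X 1 : MvPolynomial (Fin 2) R) ^ d 1) := by
    have hneg : (-X 0 - X 1 : MvPolynomial (Fin 2) R) = -1 * (X 0 + X 1) := by ring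
    rw [monomial_fin_two, ← X_pow_eq_monomial, C_1, one_mul, map_mul, map_pow, map_pow,
      aeval_X, aeval_X]
    simp only [Matrix.cons_val_zero, Matrix.cons_val_one, hneg, mul_pow, map_pow, map_neg, C_1]
    ring
  rw [hsubst, coeff_C_mul, coeff_monomial_mul', coeff_add_pow]
  by_cases hab : d 0 ≤ d 1
  · simp [Finsupp.single_le_iff, hab]
  · simp [Finsupp.single_le_iff, hab, Nat.choose_eq_zero_of_lt (not_le.mp hab)]

end MvPolynomial

theorem trace_cyclic_substitution (N : ℕ)
    (σ : homogeneousSubmodule (Fin 2) ℚ N →ₗ[ℚ] homogeneousSubmodule (Fin 2) ℚ N)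
    (hσ : ∀ P : homogeneousSubmodule (Fin 2) ℚ N,
      (σ P : MvPolynomial (Fin 2) ℚ) = aeval ![X 1, -X 0 - X 1] (P : MvPolynomial (Fin 2) ℚ)) :
    LinearMap.trace ℚ _ σ =
      if N % 3 = 0 then 1 else if N % 3 = 1 then -1 else 0 := by
  have hdiag : ∀ i : antidiagonal N,
      (homogeneousBasisFinTwo N).repr (σ (homogeneousBasisFinTwo N i)) i =
        (-1) ^ i.1.2 * (i.1.2.choose i.1.1 : ℚ) := by
    intro i
    rw [homogeneousBasisFinTwo_repr_apply, hσ, coe_homogeneousBasisFinTwo_apply,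
      coeff_aeval_cyclic_monomial]
    simp
  rw [LinearMap.trace_eq_sum_basis_repr (homogeneousBasisFinTwo N), Fintype.sum_congr _ _ hdiag,
    sum_coe_sort (antidiagonal N) fun p => (-1) ^ p.2 * (p.2.choose p.1 : ℚ),
    sum_antidiagonal_neg_one_pow_mul_choose]

end
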